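/- The spherical arc complexes listed in Theorem 5 have the stated dimension: for a bordered surface F_{g,(δ₁,…,δ_r)}^s, the arc complex Arc(F), when it is a PL-sphere, has dimension 6g - 7 + 3r + 2s + δ₁ + ⋯ + δ_r. In particular, for a polygon (g=s=0, r=1, δ₁=n), the arc complex of an n-gon is a PL-sphere of dimension n - 4. -/

import Mathlib

/-- A diagonal of a convex `n`-gon with vertices `0, 1, …, n-1`: a pair `(i, j)`
with `i < j`, connecting non-adjacent vertices. -/
def IsPolygonDiagonal (n : ℕ) (d : ℕ × ℕ) : Prop :=
  d.1 < d.2 ∧ d.2 < n ∧ d.1 + 2 ≤ d.2 ∧ ¬(d.1 = 0 ∧ d.2 = n - 1)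

/-- Two diagonals (each written as an increasing pair) cross in the interior. -/
def DiagonalsCross (d e : ℕ × ℕ) : Prop :=
  (d.1 < e.1 ∧ e.1 < d.2 ∧ d.2 < e.2) ∨ (e.1 < d.1 ∧ d.1 < e.2 ∧ e.2 < d.2)

/-!
Generalise from the vertices `0, …, n-1` to an arbitrary finite vertex set `V ⊆ ℕ`,
cyclically ordered by `ℕ`. A diagonal `d` of a maximal non-crossing family `S` cuts the
polygon into the polygon on the vertices in `[d.1, d.2]` and the polygon on the remaining
vertices together with `d.1, d.2`; the other members of `S` split accordingly into maximal
non-crossing families of the two pieces. The two vertex counts add up to `#V + 2`, so by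
induction `#S = (#V₁ - 3) + (#V₂ - 3) + 1 = #V - 3`. When `S` is empty, `V` has no diagonal,
so `#V ≤ 3`.
-/

open Finset

namespace ConvexPolygon

/-- The edge from `min V` to `max V` is a side, so a diagonal needs vertices on both
of its arcs. -/
def IsDiagonal (V : Finset ℕ) (d : ℕ × ℕ) : Prop :=
  d.1 ∈ V ∧ d.2 ∈ V ∧ (∃ x ∈ V, d.1 < x ∧ x < d.2) ∧ ∃ y ∈ V, y < d.1 ∨ d.2 < y

structure IsTriangulation (V : Finset ℕ) (S : Finset (ℕ × ℕ)) : Prop where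
  isDiagonal : ∀ d ∈ S, IsDiagonal V d
  not_cross : ∀ d ∈ S, ∀ e ∈ S, ¬DiagonalsCross d e
  maximal : ∀ d, IsDiagonal V d → (∀ e ∈ S, ¬DiagonalsCross d e) → d ∈ S

def innerVertices (V : Finset ℕ) (d : ℕ × ℕ) : Finset ℕ :=
  V.filter fun v => d.1 ≤ v ∧ v ≤ d.2

def outerVertices (V : Finset ℕ) (d : ℕ × ℕ) : Finset ℕ :=
  V.filter fun v => v ≤ d.1 ∨ d.2 ≤ v

def innerDiagonals (S : Finset (ℕ × ℕ)) (d : ℕ × ℕ) : Finset (ℕ × ℕ) :=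
  (S.filter fun e => d.1 ≤ e.1 ∧ e.2 ≤ d.2).erase d

def outerDiagonals (S : Finset (ℕ × ℕ)) (d : ℕ × ℕ) : Finset (ℕ × ℕ) :=
  S.filter fun e => ¬(d.1 ≤ e.1 ∧ e.2 ≤ d.2)

variable {V W : Finset ℕ} {S T : Finset (ℕ × ℕ)} {d e : ℕ × ℕ} {v : ℕ}

@[simp]
theorem mem_innerVertices : v ∈ innerVertices V d ↔ v ∈ V ∧ d.1 ≤ v ∧ v ≤ d.2 :=
  mem_filter

@[simp]
theorem mem_outerVertices : v ∈ outerVertices V d ↔ v ∈ V ∧ (v ≤ d.1 ∨ d.2 ≤ v) :=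
  mem_filter

@[simp]
theorem mem_innerDiagonals :
    e ∈ innerDiagonals S d ↔ e ≠ d ∧ e ∈ S ∧ d.1 ≤ e.1 ∧ e.2 ≤ d.2 := by
  simp [innerDiagonals]

@[simp]
theorem mem_outerDiagonals :
    e ∈ outerDiagonals S d ↔ e ∈ S ∧ ¬(d.1 ≤ e.1 ∧ e.2 ≤ d.2) :=
  mem_filter

theorem isPolygonDiagonal_iff_isDiagonal_range {n : ℕ} :
    IsPolygonDiagonal n d ↔ IsDiagonal (range n) d := by
  simp only [IsPolygonDiagonal, IsDiagonal, mem_range]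
  constructor
  · rintro ⟨-, h2, h3, h4⟩
    refine ⟨by omega, h2, ⟨d.1 + 1, by omega, by omega, by omega⟩, ?_⟩
    by_cases h0 : d.1 = 0
    · exact ⟨n - 1, by omega, .inr (by omega)⟩
    · exact ⟨0, by omega, .inl (by omega)⟩
  · rintro ⟨-, h2, ⟨x, -, hx1, hx2⟩, ⟨y, hy, hy'⟩⟩
    exact ⟨by omega, h2, by omega, by omega⟩

theorem IsDiagonal.mono (hWV : W ⊆ V) (hd : IsDiagonal W d) : IsDiagonal V d := by
  obtain ⟨h1, h2, ⟨x, hx, hx'⟩, ⟨y, hy, hy'⟩⟩ := hd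
  exact ⟨hWV h1, hWV h2, ⟨x, hWV hx, hx'⟩, ⟨y, hWV hy, hy'⟩⟩

theorem exists_isDiagonal_of_four_le_card (hV : 4 ≤ #V) : ∃ d, IsDiagonal V d := by
  let a := V.orderEmbOfFin rfl
  have ha : ∀ i, a i ∈ V := V.orderEmbOfFin_mem rfl
  have hlt : ∀ {i j : ℕ} (hij : i < j) (hj : j < #V), a ⟨i, hij.trans hj⟩ < a ⟨j, hj⟩ :=
    fun hij _ => a.strictMono (Fin.mk_lt_mk.2 hij)
  exact ⟨(a ⟨1, by omega⟩, a ⟨3, by omega⟩), ha _, ha _,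
    ⟨a ⟨2, by omega⟩, ha _, hlt (by norm_num) _, hlt (by norm_num) _⟩,
    ⟨a ⟨0, by omega⟩, ha _, .inl (hlt (by norm_num) _)⟩⟩

theorem IsDiagonal.card_innerVertices_add_card_outerVertices (hd : IsDiagonal V d) :
    #(innerVertices V d) + #(outerVertices V d) = #V + 2 := by
  obtain ⟨h1, h2, ⟨x, -, hx1, hx2⟩, -⟩ := hd
  have hunion : innerVertices V d ∪ outerVertices V d = V := by
    ext v
    simp only [mem_union, mem_innerVertices, mem_outerVertices, ← and_or_left,
      and_iff_left_iff_imp]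
    intro
    omega
  have hinter : innerVertices V d ∩ outerVertices V d = {d.1, d.2} := by
    ext v
    simp only [mem_inter, mem_innerVertices, mem_outerVertices, mem_insert, mem_singleton]
    constructor
    · rintro ⟨⟨-, h⟩, -, h'⟩
      omega
    · rintro (rfl | rfl)
      · exact ⟨⟨h1, by omega⟩, h1, by omega⟩
      · exact ⟨⟨h2, by omega⟩, h2, by omega⟩
  rw [← card_union_add_card_inter, hunion, hinter, card_pair (by omega)]

theorem IsDiagonal.three_le_card_innerVertices (hd : IsDiagonal V d) :
    3 ≤ #(innerVertices V d) := by
  obtain ⟨h1, h2, ⟨x, hx, hx1, hx2⟩, -⟩ := hd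
  exact two_lt_card.2 ⟨d.1, mem_innerVertices.2 ⟨h1, by omega⟩,
    x, mem_innerVertices.2 ⟨hx, by omega⟩,
    d.2, mem_innerVertices.2 ⟨h2, by omega⟩, by omega, by omega, by omega⟩

theorem IsDiagonal.three_le_card_outerVertices (hd : IsDiagonal V d) :
    3 ≤ #(outerVertices V d) := by
  obtain ⟨h1, h2, ⟨x, -, hx1, hx2⟩, ⟨y, hy, hy'⟩⟩ := hd
  exact two_lt_card.2 ⟨d.1, mem_outerVertices.2 ⟨h1, by omega⟩,
    y, mem_outerVertices.2 ⟨hy, by omega⟩,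
    d.2, mem_outerVertices.2 ⟨h2, by omega⟩, by omega, by omega, by omega⟩

theorem card_eq_card_innerDiagonals_add_card_outerDiagonals (hd : d ∈ S) :
    #S = #(innerDiagonals S d) + #(outerDiagonals S d) + 1 := by
  have hdin : d ∈ S.filter fun e => d.1 ≤ e.1 ∧ e.2 ≤ d.2 :=
    mem_filter.2 ⟨hd, le_rfl, le_rfl⟩
  rw [innerDiagonals, outerDiagonals, card_erase_of_mem hdin,
    ← card_filter_add_card_filter_not (s := S) fun e => d.1 ≤ e.1 ∧ e.2 ≤ d.2]
  have := card_pos.2 ⟨d, hdin⟩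
  omega

theorem IsTriangulation.restrict (hS : IsTriangulation V S) (hWV : W ⊆ V) (hTS : T ⊆ S)
    (hdiag : ∀ e ∈ T, IsDiagonal W e) (hmem : ∀ e ∈ S, IsDiagonal W e → e ∈ T)
    (hsep : ∀ f, IsDiagonal W f → ∀ e ∈ S, e ∉ T → ¬DiagonalsCross f e) :
    IsTriangulation W T where
  isDiagonal := hdiag
  not_cross d hd e he := hS.not_cross d (hTS hd) e (hTS he)
  maximal f hf hfT := by
    refine hmem f (hS.maximal f (hf.mono hWV) fun e he => ?_) hf
    by_cases heT : e ∈ T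
    · exact hfT e heT
    · exact hsep f hf e he heT

theorem IsTriangulation.inner (hS : IsTriangulation V S) (hd : d ∈ S) :
    IsTriangulation (innerVertices V d) (innerDiagonals S d) := by
  obtain ⟨hd1, hd2, -, -⟩ := hS.isDiagonal d hd
  refine hS.restrict (filter_subset _ _) ((erase_subset _ _).trans (filter_subset _ _))
    ?_ ?_ ?_
  · intro e he
    obtain ⟨hne, heS, h1, h2⟩ := mem_innerDiagonals.1 he
    obtain ⟨he1, he2, ⟨x, hx, hx1, hx2⟩, -⟩ := hS.isDiagonal e heS
    have hne' : d.1 < e.1 ∨ e.2 < d.2 := by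
      by_contra! h
      exact hne (Prod.ext (by omega) (by omega))
    refine ⟨mem_innerVertices.2 ⟨he1, by omega⟩, mem_innerVertices.2 ⟨he2, by omega⟩,
      ⟨x, mem_innerVertices.2 ⟨hx, by omega⟩, hx1, hx2⟩, ?_⟩
    rcases hne' with h | h
    · exact ⟨d.1, mem_innerVertices.2 ⟨hd1, by omega⟩, .inl h⟩
    · exact ⟨d.2, mem_innerVertices.2 ⟨hd2, by omega⟩, .inr h⟩
  · rintro e heS ⟨he1, he2, -, y, hy, hy'⟩
    simp only [mem_innerVertices] at he1 he2 hy
    refine mem_innerDiagonals.2 ⟨?_, heS, by omega, by omega⟩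
    rintro rfl
    omega
  · rintro f ⟨hf1, hf2, -, -⟩ e heS heT
    simp only [mem_innerVertices] at hf1 hf2
    have hde := hS.not_cross d hd e heS
    by_cases hed : e = d
    · subst hed
      simp only [DiagonalsCross] at hde ⊢
      omega
    · have hout : ¬(d.1 ≤ e.1 ∧ e.2 ≤ d.2) := fun h =>
        heT (mem_innerDiagonals.2 ⟨hed, heS, h⟩)
      obtain ⟨-, -, ⟨x, -, hx⟩, -⟩ := hS.isDiagonal e heS
      simp only [DiagonalsCross] at hde ⊢
      omega

theorem IsTriangulation.outer (hS : IsTriangulation V S) (hd : d ∈ S) :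
    IsTriangulation (outerVertices V d) (outerDiagonals S d) := by
  obtain ⟨hd1, hd2, ⟨z, -, hz⟩, -⟩ := hS.isDiagonal d hd
  refine hS.restrict (filter_subset _ _) (filter_subset _ _) ?_ ?_ ?_
  · intro e he
    obtain ⟨heS, hout⟩ := mem_outerDiagonals.1 he
    obtain ⟨he1, he2, ⟨x, hx, hx1, hx2⟩, ⟨y, hy, hy'⟩⟩ := hS.isDiagonal e heS
    have hde := hS.not_cross d hd e heS
    simp only [DiagonalsCross] at hde
    refine ⟨mem_outerVertices.2 ⟨he1, by omega⟩, mem_outerVertices.2 ⟨he2, by omega⟩,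
      ?_, ?_⟩
    · by_cases hsep : e.2 ≤ d.1 ∨ d.2 ≤ e.1
      · exact ⟨x, mem_outerVertices.2 ⟨hx, by omega⟩, hx1, hx2⟩
      · by_cases h : e.1 < d.1
        · exact ⟨d.1, mem_outerVertices.2 ⟨hd1, by omega⟩, h, by omega⟩
        · exact ⟨d.2, mem_outerVertices.2 ⟨hd2, by omega⟩, by omega, by omega⟩
    · by_cases h : e.2 ≤ d.1
      · exact ⟨d.2, mem_outerVertices.2 ⟨hd2, by omega⟩, .inr (by omega)⟩
      · by_cases h' : d.2 ≤ e.1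
        · exact ⟨d.1, mem_outerVertices.2 ⟨hd1, by omega⟩, .inl (by omega)⟩
        · exact ⟨y, mem_outerVertices.2 ⟨hy, by omega⟩, hy'⟩
  · rintro e heS ⟨he1, he2, ⟨x, hx, hx1, hx2⟩, -⟩
    simp only [mem_outerVertices] at he1 he2 hx
    exact mem_outerDiagonals.2 ⟨heS, by omega⟩
  · rintro f ⟨hf1, hf2, -, -⟩ e heS heT
    simp only [mem_outerVertices] at hf1 hf2
    simp only [mem_outerDiagonals, heS, true_and, not_not] at heT
    obtain ⟨-, -, ⟨x, -, hx⟩, -⟩ := hS.isDiagonal e heS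
    simp only [DiagonalsCross]
    omega

theorem IsTriangulation.card_eq (hS : IsTriangulation V S) : #S = #V - 3 := by
  induction hV : #V using Nat.strong_induction_on generalizing V S with
  | _ m ih =>
  obtain rfl | ⟨d, hd⟩ := S.eq_empty_or_nonempty
  · have : #V ≤ 3 := by
      by_contra! h
      obtain ⟨d, hd⟩ := exists_isDiagonal_of_four_le_card h
      simpa using hS.maximal d hd (by simp)
    rw [card_empty]
    omega
  · have hdV := hS.isDiagonal d hd
    have hsum := hdV.card_innerVertices_add_card_outerVertices
    have h₁ := hdV.three_le_card_innerVertices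
    have h₂ := hdV.three_le_card_outerVertices
    rw [card_eq_card_innerDiagonals_add_card_outerDiagonals hd,
      ih _ (by omega) (hS.inner hd) rfl, ih _ (by omega) (hS.outer hd) rfl]
    omega

end ConvexPolygon

theorem polygon_arc_complex_top_dimension_general (n : ℕ)
    (S : Finset (ℕ × ℕ))
    (hdiag : ∀ d ∈ S, IsPolygonDiagonal n d)
    (hnc : ∀ d ∈ S, ∀ e ∈ S, ¬DiagonalsCross d e)
    (hmax : ∀ d : ℕ × ℕ, IsPolygonDiagonal n d →
      (∀ e ∈ S, ¬DiagonalsCross d e ∧ ¬DiagonalsCross e d) → d ∈ S) :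
    S.card = n - 3 := by
  have hS : ConvexPolygon.IsTriangulation (Finset.range n) S :=
    { isDiagonal := fun d hd =>
        ConvexPolygon.isPolygonDiagonal_iff_isDiagonal_range.1 (hdiag d hd)
      not_cross := hnc
      maximal := fun d hd hdS =>
        hmax d (ConvexPolygon.isPolygonDiagonal_iff_isDiagonal_range.2 hd)
          fun e he => ⟨hdS e he, fun hed => hdS e he (Or.symm hed)⟩ }
  simpa using hS.card_eq

/-- The arc complex of an `n`-gon (`n ≥ 4`) is a PL-sphere of dimension `n - 4`;
its maximal simplices, i.e. the maximal families of pairwise non-crossing diagonals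
of the convex `n`-gon, all have exactly `n - 3` elements. -/
theorem polygon_arc_complex_top_dimension (n : ℕ) (hn : 4 ≤ n)
    (S : Finset (ℕ × ℕ))
    (hdiag : ∀ d ∈ S, IsPolygonDiagonal n d)
    (hnc : ∀ d ∈ S, ∀ e ∈ S, ¬DiagonalsCross d e)
    (hmax : ∀ d : ℕ × ℕ, IsPolygonDiagonal n d →
      (∀ e ∈ S, ¬DiagonalsCross d e ∧ ¬DiagonalsCross e d) → d ∈ S) :
    S.card = n - 3 :=
  polygon_arc_complex_top_dimension_general n S hdiag hnc hmax
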